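/- Let X and Z be jointly distributed random variables on finite sets and let ε > 0. Then Pr_{z←Z}[ H_∞(X | Z=z) ≥ H̃_∞(X|Z) − log₂(1/ε) ] ≥ 1 − ε, where H_∞(X | Z=z) denotes the min-entropy of the conditional distribution of X given Z = z. -/
import Mathlib


open Finset

/-- Min-entropy of a distribution on a finite set: `-log₂ (max_ω p ω)`. -/
noncomputable def minEntropy {Ω : Type*} [Fintype Ω] (p : Ω → ℝ) : ℝ :=
  - Real.logb 2 (⨆ ω, p ω)

/-- Marginal of the second component of a joint distribution. -/
noncomputable def margZ {A B : Type*} [Fintype A] (p : A × B → ℝ) : B → ℝ :=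
  fun b => ∑ a, p (a, b)

/-- Average-case min-entropy `H̃_∞(X|Z) = -log₂ (E_{z←Z} max_x Pr[X = x | Z = z])`,
for a joint distribution `p` of `(X, Z)`; note that
`E_{z←Z} max_x Pr[X = x | Z = z] = ∑_z max_x Pr[X = x, Z = z]`. -/
noncomputable def avgMinEntropy {A B : Type*} [Fintype A] [Fintype B] (p : A × B → ℝ) : ℝ :=
  - Real.logb 2 (∑ b, ⨆ a, p (a, b))

/-- With probability at least `1 - ε` over `z ← Z`, the conditional min-entropy
`H_∞(X | Z = z)` is at least `H̃_∞(X|Z) - log₂(1/ε)`. -/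
theorem condMinEntropy_high_whp
    (A B : Type*) [Fintype A] [Fintype B] [Nonempty A] [Nonempty B]
    (p : A × B → ℝ) (hp0 : ∀ w, 0 ≤ p w) (hp1 : ∑ w, p w = 1)
    (ε : ℝ) (hε : 0 < ε) :
    1 - ε ≤
      ∑ z ∈ (Finset.univ : Finset B).filter (fun z =>
          avgMinEntropy p - Real.logb 2 (1 / ε) ≤
            minEntropy (fun a : A => p (a, z) / margZ p z)),
        margZ p z := by
  classical
  have hbdd : ∀ b : B, BddAbove (Set.range fun a : A => p (a, b)) :=
    fun b => (Set.finite_range _).bddAbove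
  set s : B → ℝ := fun b => ⨆ a, p (a, b) with hs_def
  have hs_le : ∀ b a, p (a, b) ≤ s b := fun b a => le_ciSup (hbdd b) a
  have hs0 : ∀ b, 0 ≤ s b := fun b =>
    le_trans (hp0 _) (hs_le b (Classical.arbitrary A))
  have hq0 : ∀ b, 0 ≤ margZ p b := fun b => Finset.sum_nonneg fun a _ => hp0 _
  have hsq : ∀ b, s b ≤ margZ p b := by
    intro b
    apply ciSup_le
    intro a
    exact Finset.single_le_sum (f := fun a' => p (a', b)) (fun a' _ => hp0 _) (mem_univ a)
  have hqsum : ∑ b, margZ p b = 1 := by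
    rw [← hp1, Fintype.sum_prod_type_right]
    rfl
  set S : ℝ := ∑ b, s b with hS_def
  have hSavg : avgMinEntropy p = - Real.logb 2 S := rfl
  have hS0 : 0 < S := by
    have hpw : ∃ w, 0 < p w := by
      by_contra h
      push_neg at h
      have := Finset.sum_nonpos (fun w (_ : w ∈ (univ : Finset (A × B))) => h w)
      rw [hp1] at this
      linarith
    obtain ⟨w, hw⟩ := hpw
    have h1 : p w ≤ s w.2 := by
      have := hs_le w.2 w.1
      simpa using this
    have h2 : s w.2 ≤ S := Finset.single_le_sum (fun b _ => hs0 b) (mem_univ w.2)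
    linarith
  set G' : Finset B := univ.filter (fun z => 0 < margZ p z ∧ s z ≤ S / ε * margZ p z)
    with hG'_def
  have hcompl : ∑ z ∈ univ \ G', margZ p z ≤ ε := by
    calc ∑ z ∈ univ \ G', margZ p z ≤ ∑ z ∈ univ \ G', ε / S * s z := by
          apply Finset.sum_le_sum
          intro z hz
          rw [Finset.mem_sdiff, hG'_def, Finset.mem_filter] at hz
          have hz' := hz.2
          push_neg at hz'
          rcases lt_or_ge 0 (margZ p z) with hq | hq
          · have h3 : S / ε * margZ p z < s z := hz' (mem_univ z) hq
            have : margZ p z = ε / S * (S / ε * margZ p z) := by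
              field_simp
            rw [this]
            have hεS : 0 < ε / S := by positivity
            nlinarith
          · have hq' : margZ p z = 0 := le_antisymm hq (hq0 z)
            rw [hq']
            exact mul_nonneg (by positivity) (hs0 z)
      _ ≤ ∑ z, ε / S * s z := by
          apply Finset.sum_le_sum_of_subset_of_nonneg (Finset.sdiff_subset)
          intro z _ _
          exact mul_nonneg (by positivity) (hs0 z)
      _ = ε / S * S := by rw [← Finset.mul_sum]
      _ = ε := by field_simp
  have hG'G : G' ⊆ (Finset.univ : Finset B).filter (fun z =>
      avgMinEntropy p - Real.logb 2 (1 / ε) ≤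
        minEntropy (fun a : A => p (a, z) / margZ p z)) := by
    intro z hz
    rw [hG'_def, Finset.mem_filter] at hz
    obtain ⟨-, hqz, hsz⟩ := hz
    rw [Finset.mem_filter]
    refine ⟨mem_univ _, ?_⟩
    have hfbdd : BddAbove (Set.range fun a : A => p (a, z) / margZ p z) :=
      (Set.finite_range _).bddAbove
    have hsupf_le : (⨆ a, p (a, z) / margZ p z) ≤ S / ε := by
      apply ciSup_le
      intro a
      rw [div_le_iff₀ hqz]
      exact (hs_le z a).trans hsz
    have hsupf_pos : 0 < ⨆ a, p (a, z) / margZ p z := by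
      have : ∃ a, 0 < p (a, z) := by
        by_contra h
        push_neg at h
        have : margZ p z ≤ 0 := Finset.sum_nonpos (fun a _ => h a)
        linarith
      obtain ⟨a, ha⟩ := this
      exact lt_of_lt_of_le (div_pos ha hqz) (le_ciSup hfbdd a)
    have hlog : Real.logb 2 (⨆ a, p (a, z) / margZ p z) ≤ Real.logb 2 (S / ε) :=
      Real.logb_le_logb_of_le (by norm_num) hsupf_pos hsupf_le
    have heq : Real.logb 2 (S / ε) = Real.logb 2 S + Real.logb 2 (1 / ε) := by
      rw [← Real.logb_mul hS0.ne' (by positivity : (1:ℝ)/ε ≠ 0)]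
      ring_nf
    rw [heq] at hlog
    rw [hSavg]
    unfold minEntropy
    linarith
  have hsplit : ∑ z ∈ univ \ G', margZ p z + ∑ z ∈ G', margZ p z = 1 := by
    rw [Finset.sum_sdiff (Finset.filter_subset _ _), hqsum]
  have h1 : 1 - ε ≤ ∑ z ∈ G', margZ p z := by linarith
  calc 1 - ε ≤ ∑ z ∈ G', margZ p z := h1
    _ ≤ _ := Finset.sum_le_sum_of_subset_of_nonneg hG'G (fun z _ _ => hq0 z)
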